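/- Antiperiodicity of the generalized sine and cosine: if m ≥ 1 is an integer and s is a generalized sine function of order m, then s(x + π_m) = −s(x) and s'(x + π_m) = −s'(x) for all x ∈ ℝ; consequently s is 2π_m-periodic. -/

import Mathlib

/-- A generalized sine function of order `m ≥ 1`: a twice continuously differentiable
function `s : ℝ → ℝ` with `s'' = -m * s^(2m-1)`, `s 0 = 0` and `s' 0 = 1`. -/
def IsGenSine (m : ℕ) (s : ℝ → ℝ) : Prop :=
  ContDiff ℝ 2 s ∧ (∀ x : ℝ, deriv (deriv s) x = -(m : ℝ) * s x ^ (2 * m - 1)) ∧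
    s 0 = 0 ∧ deriv s 0 = 1

/-- The generalized half-period `π_m := 2 ∫₀¹ (1 - t^(2m))^(-1/2) dt`. -/
noncomputable def piGen (m : ℕ) : ℝ :=
  2 * ∫ t in (0:ℝ)..(1:ℝ), ((1 - t ^ (2 * m) : ℝ) ^ (-(1:ℝ)/2))

namespace GenSineAux

open Set intervalIntegral MeasureTheory NNReal

/-- The integrand. -/
noncomputable def G (m : ℕ) (t : ℝ) : ℝ := (1 - t ^ (2 * m)) ^ (-(1:ℝ)/2)

lemma G_nonneg {m : ℕ} {t : ℝ} (h0 : 0 ≤ t) (h1 : t ≤ 1) : 0 ≤ G m t :=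
  Real.rpow_nonneg (by nlinarith [pow_le_one₀ h0 h1 (n := 2*m)]) _

lemma pow_lt_one_of_abs {m : ℕ} (hm : 1 ≤ m) {y : ℝ} (hy : |y| < 1) : y ^ (2*m) < 1 := by
  have : |y| ^ (2*m) < 1 := pow_lt_one₀ (abs_nonneg y) hy (by omega)
  calc y ^ (2*m) ≤ |y ^ (2*m)| := le_abs_self _
  _ = |y| ^ (2*m) := abs_pow y _
  _ < 1 := this

lemma G_contAt {m : ℕ} (hm : 1 ≤ m) {y : ℝ} (hy : |y| < 1) : ContinuousAt (G m) y := by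
  apply ContinuousAt.rpow_const
  · exact (continuousAt_const.sub ((continuousAt_id).pow _))
  · left
    have := pow_lt_one_of_abs hm hy
    intro h
    nlinarith [h]

lemma G_contOn {m : ℕ} (hm : 1 ≤ m) : ContinuousOn (G m) (Ioo (-1:ℝ) 1) := fun y hy =>
  ((G_contAt hm (abs_lt.mpr ⟨hy.1, hy.2⟩)).continuousWithinAt)

lemma G_aesm {m : ℕ} (hm : 1 ≤ m) :
    AEStronglyMeasurable (G m) (volume.restrict (Ioc (0:ℝ) 1)) := by
  have h : AEStronglyMeasurable (G m) (volume.restrict (Ioo (0:ℝ) 1)) :=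
    ((G_contOn hm).mono (Ioo_subset_Ioo (by norm_num) le_rfl)).aestronglyMeasurable
      measurableSet_Ioo
  rwa [Measure.restrict_congr_set Ioo_ae_eq_Ioc] at h

lemma G_int (m : ℕ) (hm : 1 ≤ m) : IntervalIntegrable (G m) volume 0 1 := by
  have h1 : IntervalIntegrable (fun t : ℝ => t ^ (-(1:ℝ)/2)) volume 0 1 :=
    intervalIntegral.intervalIntegrable_rpow' (by norm_num)
  have h2 : IntervalIntegrable (fun t : ℝ => (1 - t) ^ (-(1:ℝ)/2)) volume 0 1 := by
    simpa using (h1.comp_sub_left 1).symm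
  refine h2.mono_fun (by simpa [Set.uIoc_of_le (by norm_num : (0:ℝ) ≤ 1)] using G_aesm hm) ?_
  rw [Filter.EventuallyLE, ae_restrict_iff' measurableSet_uIoc]
  refine Filter.Eventually.of_forall (fun t ht => ?_)
  rw [Set.uIoc_of_le (by norm_num : (0:ℝ) ≤ 1)] at ht
  obtain ⟨ht0, ht1⟩ := ht
  have hb : (0:ℝ) ≤ 1 - t ^ (2*m) := by nlinarith [pow_le_one₀ ht0.le ht1 (n := 2*m)]
  show |G m t| ≤ |(1 - t :ℝ) ^ (-(1:ℝ)/2)|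
  rw [G, abs_of_nonneg (Real.rpow_nonneg hb _), abs_of_nonneg (Real.rpow_nonneg (by linarith) _)]
  rcases eq_or_lt_of_le ht1 with h | h
  · subst h
    simp [Real.zero_rpow (by norm_num : -(1:ℝ)/2 ≠ 0), one_pow]
  · have hlt : t ^ (2*m) ≤ t := by
      calc t ^ (2*m) ≤ t ^ 1 := pow_le_pow_of_le_one ht0.le h.le (by omega)
      _ = t := pow_one t
    exact Real.rpow_le_rpow_of_nonpos (by linarith) (by linarith) (by norm_num)


/-- The primitive of the integrand. -/
noncomputable def F (m : ℕ) (y : ℝ) : ℝ := ∫ t in (0:ℝ)..y, G m t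

lemma F_zero (m : ℕ) : F m 0 = 0 := intervalIntegral.integral_same

lemma G_int_sub {m : ℕ} (hm : 1 ≤ m) {y : ℝ} (h0 : 0 ≤ y) (h1 : y ≤ 1) :
    IntervalIntegrable (G m) volume 0 y :=
  (G_int m hm).mono_set (Set.uIcc_subset_uIcc left_mem_uIcc (by
    rw [Set.uIcc_of_le (by norm_num : (0:ℝ) ≤ 1)]; exact ⟨h0, h1⟩))

lemma F_cont {m : ℕ} (hm : 1 ≤ m) : ContinuousOn (F m) (Icc 0 1) := by
  have h : IntegrableOn (G m) (uIcc (0:ℝ) 1) volume := by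
    rw [Set.uIcc_of_le (by norm_num : (0:ℝ) ≤ 1)]
    exact (intervalIntegrable_iff_integrableOn_Icc_of_le (by norm_num)).mp (G_int m hm)
  have := intervalIntegral.continuousOn_primitive_interval (a := 0) (b := 1) h
  rwa [Set.uIcc_of_le (by norm_num : (0:ℝ) ≤ 1)] at this

lemma F_hasDeriv {m : ℕ} (hm : 1 ≤ m) {y : ℝ} (h0 : 0 ≤ y) (h1 : y < 1) :
    HasDerivAt (F m) (G m y) y := by
  refine intervalIntegral.integral_hasDerivAt_right (G_int_sub hm h0 h1.le) ?_ ?_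
  · refine ⟨Ioo (-1 : ℝ) 1, Ioo_mem_nhds (by linarith) h1, ?_⟩
    exact (G_contOn hm).aestronglyMeasurable measurableSet_Ioo
  · exact G_contAt hm (abs_lt.mpr ⟨by linarith, h1⟩)

lemma F_mono {m : ℕ} (hm : 1 ≤ m) {y z : ℝ} (h0 : 0 ≤ y) (hyz : y ≤ z) (h1 : z ≤ 1) :
    F m y ≤ F m z := by
  have hy : IntervalIntegrable (G m) volume 0 y := G_int_sub hm h0 (le_trans hyz h1)
  have hyz' : IntervalIntegrable (G m) volume y z :=
    (G_int m hm).mono_set (Set.uIcc_subset_uIcc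
      (by rw [Set.uIcc_of_le (by norm_num : (0:ℝ) ≤ 1)]; exact ⟨h0, le_trans hyz h1⟩)
      (by rw [Set.uIcc_of_le (by norm_num : (0:ℝ) ≤ 1)]; exact ⟨le_trans h0 hyz, h1⟩))
  have hadd := intervalIntegral.integral_add_adjacent_intervals hy hyz'
  have hnn : 0 ≤ ∫ t in y..z, G m t :=
    intervalIntegral.integral_nonneg hyz (fun u hu => G_nonneg (le_trans h0 hu.1) (le_trans hu.2 h1))
  show F m y ≤ F m z
  rw [F, F, ← hadd]
  linarith

lemma F_nonneg {m : ℕ} (hm : 1 ≤ m) {y : ℝ} (h0 : 0 ≤ y) (h1 : y ≤ 1) : 0 ≤ F m y := by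
  have := F_mono hm le_rfl h0 h1
  rwa [F_zero] at this


section Energy

variable {m : ℕ} {s : ℝ → ℝ} (hm : 1 ≤ m) (hs : IsGenSine m s)

include hs in
lemma diff₁ : Differentiable ℝ s := hs.1.differentiable (by norm_num)

include hs in
lemma diff₂ : Differentiable ℝ (deriv s) := by
  have h : ContDiff ℝ ((1:ℕ) + 1) s := by exact_mod_cast hs.1
  exact ((contDiff_succ_iff_deriv.mp h).2.2.differentiable (by norm_num))

include hm hs in
lemma energy : ∀ x : ℝ, (deriv s x) ^ 2 + s x ^ (2 * m) = 1 := by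
  have hE : ∀ x : ℝ, HasDerivAt (fun x => (deriv s x) ^ 2 + s x ^ (2*m)) 0 x := by
    intro x
    have h1 : HasDerivAt (deriv s) (deriv (deriv s) x) x := (diff₂ hs x).hasDerivAt
    have h2 : HasDerivAt s (deriv s x) x := (diff₁ hs x).hasDerivAt
    have h3 := (h1.pow 2).add (h2.pow (2*m))
    refine h3.congr_deriv ?_
    rw [hs.2.1 x]
    push_cast
    ring
  have hconst := is_const_of_deriv_eq_zero
    (f := fun x => (deriv s x) ^ 2 + s x ^ (2*m))
    (fun x => (hE x).differentiableAt) (fun x => (hE x).deriv)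
  intro x
  have h4 : deriv s x ^ 2 + s x ^ (2*m) = deriv s 0 ^ 2 + s 0 ^ (2*m) := hconst x 0
  rw [hs.2.2.2, hs.2.2.1] at h4
  rw [h4]
  simp [zero_pow (by omega : 2*m ≠ 0)]

include hm hs in
lemma abs_le_one : ∀ x : ℝ, |s x| ≤ 1 := by
  intro x
  by_contra h
  push_neg at h
  have h1 : 1 ≤ |s x| ^ (2*m) := one_le_pow₀ h.le
  have h2 : |s x| ^ (2*m) = s x ^ (2*m) := by
    rw [← abs_pow, abs_of_nonneg]
    exact (Even.pow_nonneg ⟨m, by ring⟩ _)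
  have h3 : 1 < |s x| ^ (2*m) := one_lt_pow₀ h (by omega)
  nlinarith [energy hm hs x, sq_nonneg (deriv s x), h2 ▸ h3]


include hm hs in
lemma keyL : ∀ b : ℝ, 0 < b → (∀ x, 0 ≤ x → x < b → 0 < deriv s x) →
    (∀ x, 0 ≤ x → x ≤ b → 0 ≤ s x ∧ F m (s x) = x) := by
  intro b hb hpos
  have hmono : StrictMonoOn s (Icc 0 b) := by
    apply strictMonoOn_of_deriv_pos (convex_Icc 0 b) ((diff₁ hs).continuous.continuousOn)
    intro x hx
    rw [interior_Icc] at hx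
    exact hpos x hx.1.le hx.2
  have hs0 : ∀ x, 0 ≤ x → x ≤ b → 0 ≤ s x := by
    intro x h0 h1
    rcases eq_or_lt_of_le h0 with h|h
    · rw [← h, hs.2.2.1]
    · have := hmono (left_mem_Icc.mpr hb.le) ⟨h0, h1⟩ h
      rw [hs.2.2.1] at this; exact this.le
  have hs1 : ∀ x, |s x| ≤ 1 := abs_le_one hm hs
  have hslt1 : ∀ x, 0 ≤ x → x < b → s x < 1 := by
    intro x h0 h1
    by_contra hge
    push_neg at hge
    have h2 : 1 ≤ s x ^ (2*m) := one_le_pow₀ hge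
    have := energy hm hs x
    nlinarith [hpos x h0 h1]
  have hder : ∀ x ∈ Ico (0:ℝ) b, HasDerivWithinAt (fun x => F m (s x)) 1 (Ici x) x := by
    intro x hx
    have hx0 := hx.1
    have hxb := hx.2
    have hsx0 := hs0 x hx0 hxb.le
    have hsx1 := hslt1 x hx0 hxb
    have hF := F_hasDeriv hm hsx0 hsx1
    have hchain : HasDerivAt (fun x => F m (s x)) (G m (s x) * deriv s x) x :=
      hF.comp x ((diff₁ hs x).hasDerivAt)
    have hc : 0 < 1 - s x ^ (2*m) := by
      have h2 : s x ^ (2*m) < 1 := pow_lt_one₀ hsx0 hsx1 (by omega)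
      linarith
    have hsq : deriv s x = Real.sqrt (1 - s x ^ (2*m)) := by
      have hE := energy hm hs x
      have h3 : (1 - s x ^ (2*m)) = (deriv s x)^2 := by linarith
      rw [h3, Real.sqrt_sq (hpos x hx0 hxb).le]
    have hval : G m (s x) * deriv s x = 1 := by
      rw [G, hsq, Real.sqrt_eq_rpow, ← Real.rpow_add hc]
      norm_num
    rw [hval] at hchain
    exact hchain.hasDerivWithinAt
  have hgder : ∀ x ∈ Ico (0:ℝ) b, HasDerivWithinAt (id : ℝ → ℝ) 1 (Ici x) x :=
    fun x _ => (hasDerivAt_id x).hasDerivWithinAt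
  have hfc : ContinuousOn (fun x => F m (s x)) (Icc 0 b) := by
    apply (F_cont hm).comp ((diff₁ hs).continuous.continuousOn)
    intro x hx
    exact ⟨hs0 x hx.1 hx.2, (abs_le.mp (hs1 x)).2⟩
  have heq := eq_of_has_deriv_right_eq (f' := fun _ => (1:ℝ)) hder hgder hfc continuousOn_id
    (by rw [hs.2.2.1, F_zero]; rfl)
  intro x h0 h1
  exact ⟨hs0 x h0 h1, heq x ⟨h0, h1⟩⟩

include hm hs in
lemma keyLb : ∀ b : ℝ, 0 < b → (∀ x, 0 ≤ x → x < b → 0 < deriv s x) → b ≤ F m 1 := by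
  intro b hb hpos
  obtain ⟨hnn, heq⟩ := keyL hm hs b hb hpos b hb.le le_rfl
  calc b = F m (s b) := heq.symm
  _ ≤ F m 1 := F_mono hm hnn (abs_le.mp (abs_le_one hm hs b)).2 le_rfl

include hs in
lemma pos_of_ne : ∀ b : ℝ, (∀ x, 0 ≤ x → x ≤ b → deriv s x ≠ 0) →
    ∀ x, 0 ≤ x → x ≤ b → 0 < deriv s x := by
  intro b hne x h0 hb
  by_contra hle
  push_neg at hle
  have hlt : deriv s x < 0 := lt_of_le_of_ne hle (hne x h0 hb)
  have hcont : ContinuousOn (deriv s) (Icc 0 x) := ((diff₂ hs).continuous).continuousOn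
  have hmem : (0:ℝ) ∈ Icc (deriv s x) (deriv s 0) := by
    rw [hs.2.2.2]; exact ⟨hlt.le, zero_le_one⟩
  obtain ⟨z, hz, hz0⟩ := intermediate_value_Icc' h0 hcont hmem
  exact hne z hz.1 (hz.2.trans hb) hz0

include hm hs in
lemma half : s (F m 1) = 1 ∧ deriv s (F m 1) = 0 := by
  have hA0 : 0 ≤ F m 1 := F_nonneg hm zero_le_one le_rfl
  have hZne : {x : ℝ | 0 ≤ x ∧ deriv s x = 0}.Nonempty := by
    by_contra hempty
    rw [Set.not_nonempty_iff_eq_empty, Set.eq_empty_iff_forall_notMem] at hempty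
    have hne : ∀ x, 0 ≤ x → x ≤ F m 1 + 1 → deriv s x ≠ 0 := by
      intro x h0 _ h
      exact hempty x ⟨h0, h⟩
    have hpos := pos_of_ne hs (F m 1 + 1) hne
    have := keyLb hm hs (F m 1 + 1) (by linarith) (fun x h0 h1 => hpos x h0 h1.le)
    linarith
  set Z := {x : ℝ | 0 ≤ x ∧ deriv s x = 0} with hZ
  have hZclosed : IsClosed Z := by
    have h : Z = Ici 0 ∩ (deriv s)⁻¹' {0} := by
      ext x; simp [hZ, Set.mem_Ici]
    rw [h]
    exact isClosed_Ici.inter (isClosed_singleton.preimage (diff₂ hs).continuous)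
  have hZbdd : BddBelow Z := ⟨0, fun x hx => hx.1⟩
  have hx₀ : sInf Z ∈ Z := IsClosed.csInf_mem hZclosed hZne hZbdd
  set x₀ := sInf Z with hx₀def
  have hx₀pos : 0 < x₀ := by
    rcases eq_or_lt_of_le hx₀.1 with h|h
    · exfalso
      have hz := hx₀.2
      rw [← h, hs.2.2.2] at hz
      norm_num at hz
    · exact h
  have hpos : ∀ x, 0 ≤ x → x < x₀ → 0 < deriv s x := by
    intro x h0 hlt
    refine pos_of_ne hs x (fun y hy0 hyx hy => ?_) x h0 le_rfl
    have : x₀ ≤ y := csInf_le hZbdd ⟨hy0, hy⟩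
    linarith
  obtain ⟨hnn, heq⟩ := keyL hm hs x₀ hx₀pos hpos x₀ hx₀pos.le le_rfl
  have hsx₀le : s x₀ ≤ 1 := (abs_le.mp (abs_le_one hm hs x₀)).2
  have hpow : s x₀ ^ (2*m) = 1 := by
    have hE := energy hm hs x₀
    rw [hx₀.2] at hE
    nlinarith
  have hsx₀ : s x₀ = 1 := by
    by_contra hne
    have h1 : s x₀ < 1 := lt_of_le_of_ne hsx₀le hne
    have := pow_lt_one₀ hnn h1 (by omega : 2*m ≠ 0)
    rw [hpow] at this
    norm_num at this
  rw [hsx₀] at heq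
  rw [heq]
  exact ⟨hsx₀, hx₀.2⟩

end Energy

section Unique

lemma v_lip (m : ℕ) (hm : 1 ≤ m) :
    LipschitzOnWith ((max 1 ((m:ℝ)*(2*m-1 : ℕ))).toNNReal)
      (fun p : ℝ × ℝ => (p.2, -(m:ℝ) * p.1 ^ (2*m-1)))
      (Icc (-1:ℝ) 1 ×ˢ (univ : Set ℝ)) := by
  rw [lipschitzOnWith_iff_dist_le_mul]
  intro p hp q hq
  set C : ℝ := (m:ℝ)*(2*m-1 : ℕ) with hC
  have hC0 : 0 ≤ C := by positivity
  have hcoe : (((max 1 C).toNNReal) : ℝ) = max 1 C :=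
    Real.coe_toNNReal _ (le_trans zero_le_one (le_max_left _ _))
  have hd0 : 0 ≤ dist p q := dist_nonneg
  have hd1 : dist p.1 q.1 ≤ dist p q := by rw [Prod.dist_eq]; exact le_max_left _ _
  have hd2 : dist p.2 q.2 ≤ dist p q := by rw [Prod.dist_eq]; exact le_max_right _ _
  have hlipf : dist (-(m:ℝ) * p.1 ^ (2*m-1)) (-(m:ℝ) * q.1 ^ (2*m-1)) ≤ C * dist p.1 q.1 := by
    rw [dist_eq_norm, dist_eq_norm]
    refine Convex.norm_image_sub_le_of_norm_deriv_le (f := fun y : ℝ => -(m:ℝ) * y ^ (2*m-1))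
      (s := Icc (-1:ℝ) 1)
      (fun y _ => ((hasDerivAt_pow (2*m-1) y).const_mul (-(m:ℝ))).differentiableAt) ?_
      (convex_Icc _ _) ?_ ?_
    · intro y hy
      rw [((hasDerivAt_pow (2*m-1) y).const_mul (-(m:ℝ))).deriv]
      have hyb : |y| ≤ 1 := abs_le.mpr ⟨hy.1, hy.2⟩
      have hpow : |y ^ (2*m-1-1)| ≤ 1 := by
        rw [abs_pow]; exact pow_le_one₀ (abs_nonneg _) hyb
      rw [Real.norm_eq_abs, abs_mul, abs_mul, abs_neg]
      have h1 : |(m:ℝ)| = (m:ℝ) := abs_of_nonneg (by positivity)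
      have h2 : |((2*m-1 : ℕ) : ℝ)| = ((2*m-1 : ℕ) : ℝ) := abs_of_nonneg (by positivity)
      rw [h1, h2, hC]
      nlinarith [abs_nonneg (y ^ (2*m-1-1)),
        mul_nonneg (Nat.cast_nonneg (α := ℝ) m) (Nat.cast_nonneg (α := ℝ) (2*m-1))]
    · exact ⟨(mem_prod.mp hq).1.1, (mem_prod.mp hq).1.2⟩
    · exact ⟨(mem_prod.mp hp).1.1, (mem_prod.mp hp).1.2⟩
  rw [Prod.dist_eq, hcoe]
  apply max_le
  · calc dist p.2 q.2 ≤ 1 * dist p q := by linarith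
    _ ≤ max 1 C * dist p q := mul_le_mul_of_nonneg_right (le_max_left _ _) hd0
  · calc dist (-(m:ℝ) * p.1 ^ (2*m-1)) (-(m:ℝ) * q.1 ^ (2*m-1)) ≤ C * dist p.1 q.1 := hlipf
    _ ≤ C * dist p q := mul_le_mul_of_nonneg_left hd1 hC0
    _ ≤ max 1 C * dist p q := mul_le_mul_of_nonneg_right (le_max_right _ _) hd0

lemma gen_unique (m : ℕ) (hm : 1 ≤ m) (f g : ℝ → ℝ)
    (hfd : Differentiable ℝ f) (hfd2 : Differentiable ℝ (deriv f))
    (hfode : ∀ x, deriv (deriv f) x = -(m:ℝ) * f x ^ (2*m-1))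
    (hfb : ∀ x, |f x| ≤ 1)
    (hgd : Differentiable ℝ g) (hgd2 : Differentiable ℝ (deriv g))
    (hgode : ∀ x, deriv (deriv g) x = -(m:ℝ) * g x ^ (2*m-1))
    (hgb : ∀ x, |g x| ≤ 1)
    (t₀ : ℝ) (h0 : f t₀ = g t₀) (h1 : deriv f t₀ = deriv g t₀) : f = g := by
  set v : ℝ → ℝ × ℝ → ℝ × ℝ := fun _ p => (p.2, -(m:ℝ) * p.1 ^ (2*m-1)) with hv
  set S : Set (ℝ × ℝ) := Icc (-1:ℝ) 1 ×ˢ (univ : Set ℝ) with hS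
  have hlip : ∀ t : ℝ, LipschitzOnWith ((max 1 ((m:ℝ)*(2*m-1 : ℕ))).toNNReal) (v t) S :=
    fun _ => v_lip m hm
  have hFP : ∀ x : ℝ, HasDerivAt (fun t => (f t, deriv f t))
      (v x (f x, deriv f x)) x := by
    intro x
    have h := ((hfd x).hasDerivAt).prodMk ((hfd2 x).hasDerivAt)
    simpa [hv, hfode x] using h
  have hGP : ∀ x : ℝ, HasDerivAt (fun t => (g t, deriv g t))
      (v x (g x, deriv g x)) x := by
    intro x
    have h := ((hgd x).hasDerivAt).prodMk ((hgd2 x).hasDerivAt)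
    simpa [hv, hgode x] using h
  have key : ∀ x : ℝ, (f x, deriv f x) = (g x, deriv g x) := by
    intro x
    set a := min t₀ x - 1 with ha
    set b := max t₀ x + 1 with hb
    have ht₀ : t₀ ∈ Ioo a b := by
      constructor
      · have := min_le_left t₀ x; simp only [ha]; linarith
      · have := le_max_left t₀ x; simp only [hb]; linarith
    have hx : x ∈ Icc a b := by
      constructor
      · have := min_le_right t₀ x; simp only [ha]; linarith
      · have := le_max_right t₀ x; simp only [hb]; linarith
    have heqon := ODE_solution_unique_of_mem_Icc (v := v) (s := fun _ => S) (fun t _ => hlip t) ht₀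
      ((hfd.continuous.prodMk hfd2.continuous).continuousOn)
      (fun t _ => hFP t)
      (fun t _ => ⟨abs_le.mp (hfb t), trivial⟩)
      ((hgd.continuous.prodMk hgd2.continuous).continuousOn)
      (fun t _ => hGP t)
      (fun t _ => ⟨abs_le.mp (hgb t), trivial⟩)
      (by rw [h0, h1])
    exact heqon hx
  funext x
  exact congrArg Prod.fst (key x)

end Unique

end GenSineAux

open GenSineAux in
theorem generalized_sine_antiperiodic' (m : ℕ) (hm : 1 ≤ m) (s : ℝ → ℝ)
    (hs : IsGenSine m s) :
    (∀ x : ℝ, s (x + piGen m) = -s x) ∧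
    (∀ x : ℝ, deriv s (x + piGen m) = -deriv s x) ∧
    Function.Periodic s (2 * piGen m) := by
  have hd1 : Differentiable ℝ s := diff₁ hs
  have hd2 : Differentiable ℝ (deriv s) := diff₂ hs
  have hb : ∀ x, |s x| ≤ 1 := abs_le_one hm hs
  obtain ⟨hhalf1, hhalf2⟩ := half hm hs
  set A : ℝ := F m 1 with hA
  have hpi : piGen m = 2 * A := rfl
  -- reflection u x = s (2A - x)
  set u : ℝ → ℝ := fun x => s (2*A - x) with hu
  have hud : Differentiable ℝ u := hd1.comp ((differentiable_const _).sub differentiable_id)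
  have hu' : deriv u = fun x => -deriv s (2*A - x) :=
    funext fun x => deriv_comp_const_sub s (2*A) x
  have hud2 : Differentiable ℝ (deriv u) := by
    rw [hu']
    exact (hd2.comp ((differentiable_const _).sub differentiable_id)).neg
  have huode : ∀ x, deriv (deriv u) x = -(m:ℝ) * u x ^ (2*m-1) := by
    intro x
    rw [hu']
    have h1 : deriv (fun x => -deriv s (2*A - x)) x
        = -(deriv (fun x => deriv s (2*A - x)) x) := deriv.neg
    rw [h1, deriv_comp_const_sub (deriv s) (2*A) x, neg_neg, hs.2.1]
  have hueq : u = s := by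
    apply gen_unique m hm u s hud hud2 huode (fun x => hb _) hd1 hd2 hs.2.1 hb A
    · show s (2*A - A) = s A
      have h2 : 2*A - A = A := by ring
      rw [h2]
    · rw [hu']
      show -deriv s (2*A - A) = deriv s A
      have : 2*A - A = A := by ring
      rw [this, hhalf2, neg_zero]
  have hs2A : s (2*A) = 0 := by
    have := congrFun hueq 0
    simp only [hu, sub_zero] at this
    rw [this, hs.2.2.1]
  have hs2A' : deriv s (2*A) = -1 := by
    have hder := congrFun (congrArg deriv hueq) 0
    rw [hu', hs.2.2.2] at hder
    simp only [sub_zero] at hder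
    linarith
  -- translation w x = -s (x + 2A)
  set w : ℝ → ℝ := fun x => -s (x + 2*A) with hw
  have hwd : Differentiable ℝ w := (hd1.comp (differentiable_id.add_const _)).neg
  have hw' : deriv w = fun x => -deriv s (x + 2*A) := by
    funext x
    have h1 : deriv (fun x => -s (x + 2*A)) x = -(deriv (fun x => s (x + 2*A)) x) := deriv.neg
    rw [hw, h1, deriv_comp_add_const s (2*A)]
  have hwd2 : Differentiable ℝ (deriv w) := by
    rw [hw']
    exact (hd2.comp (differentiable_id.add_const _)).neg
  have hodd : Odd (2*m - 1) := ⟨m - 1, by omega⟩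
  have hwode : ∀ x, deriv (deriv w) x = -(m:ℝ) * w x ^ (2*m-1) := by
    intro x
    rw [hw']
    have h1 : deriv (fun x => -deriv s (x + 2*A)) x
        = -(deriv (fun x => deriv s (x + 2*A)) x) := deriv.neg
    rw [h1, deriv_comp_add_const (deriv s) (2*A), hs.2.1]
    have h2 : w x ^ (2*m-1) = -(s (x + 2*A) ^ (2*m-1)) := by
      rw [hw]
      exact hodd.neg_pow _
    rw [h2]
    ring
  have hweq : w = s := by
    apply gen_unique m hm w s hwd hwd2 hwode (fun x => by rw [hw]; simpa using hb _)
      hd1 hd2 hs.2.1 hb 0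
    · show -s (0 + 2*A) = s 0
      rw [zero_add, hs2A, hs.2.2.1, neg_zero]
    · rw [hw', hs.2.2.2]
      show -deriv s (0 + 2*A) = 1
      rw [zero_add, hs2A']
      norm_num
  have hanti : ∀ x : ℝ, s (x + piGen m) = -s x := by
    intro x
    have h3 : -s (x + 2*A) = s x := congrFun hweq x
    simp only [hpi]
    linarith [h3]
  have hanti' : ∀ x : ℝ, deriv s (x + piGen m) = -deriv s x := by
    intro x
    have h3 : -deriv s (x + 2*A) = deriv s x := by
      have h4 := congrFun (congrArg deriv hweq) x
      rw [hw'] at h4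
      exact h4
    simp only [hpi]
    linarith [h3]
  refine ⟨hanti, hanti', ?_⟩
  intro x
  have h1 : x + 2 * piGen m = (x + piGen m) + piGen m := by ring
  rw [h1, hanti, hanti, neg_neg]

/-- antiperiodicity `s(x + π_m) = -s(x)`, `s'(x + π_m) = -s'(x)`,
and consequently `s` is `2π_m`-periodic. -/
theorem generalized_sine_antiperiodic (m : ℕ) (hm : 1 ≤ m) (s : ℝ → ℝ)
    (hs : IsGenSine m s) :
    (∀ x : ℝ, s (x + piGen m) = -s x) ∧
    (∀ x : ℝ, deriv s (x + piGen m) = -deriv s x) ∧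
    Function.Periodic s (2 * piGen m) :=
  generalized_sine_antiperiodic' m hm s hs
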